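/- arXiv:1506.00686 — 2 statements merged into one kernel-verified Lean document; each statement's English description precedes it below -/
import Mathlib

section
/- For a probability space with filtration (𝒢_t) and sub-filtration (ℱ_t) with ℱ_t ⊆ 𝒢_t, a stopping time τ, and any integrable random variable X: on the event {τ > t}, the conditional expectation E[1_{t<τ≤s} X | 𝒢_t] equals 1_{τ>t} · E[1_{t<τ≤s} X | ℱ_t] / E[1_{τ>t} | ℱ_t], provided 𝒢_t = ℱ_t ∨ σ(1_{τ≤u} : u ≤ t) and E[1_{τ>t} | ℱ_t] > 0 almost surely. -/
open MeasureTheory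

/-- Bielecki–Rutkowski key lemma: with `𝒢_t = ℱ_t ∨ σ(1_{τ≤u} : u ≤ t)`, a stopping time `τ`,
an integrable `X` and `E[1_{τ>t}|ℱ_t] > 0` a.s., on the event `{τ > t}` one has
`E[1_{t<τ≤s} X | 𝒢_t] = E[1_{t<τ≤s} X | ℱ_t] / E[1_{τ>t} | ℱ_t]`
(equivalently, `= 1_{τ>t}·E[1_{t<τ≤s}X|ℱ_t]/E[1_{τ>t}|ℱ_t]`, since the indicator is `1` there). -/
theorem conditional_expectation_filtration_switch
    {Ω : Type*} {mΩ : MeasurableSpace Ω} (μ : Measure Ω) [IsProbabilityMeasure μ]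
    (F G : Filtration ℝ mΩ) (τ : Ω → ℝ) (t s : ℝ) (X : Ω → ℝ)
    (hτ : IsStoppingTime G (fun ω => (τ ω : WithTop ℝ)))
    (hG : ∀ u : ℝ, (G u : MeasurableSpace Ω) =
      (F u : MeasurableSpace Ω) ⊔
        MeasurableSpace.generateFrom {A : Set Ω | ∃ v ≤ u, A = {ω | τ ω ≤ v}})
    (hX : Integrable X μ)
    (hpos : ∀ᵐ ω ∂μ,
      0 < (μ[Set.indicator {ω' | t < τ ω'} (fun _ => (1:ℝ)) | F t]) ω) :
    ∀ᵐ ω ∂μ, t < τ ω →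
      (μ[Set.indicator {ω' | t < τ ω' ∧ τ ω' ≤ s} X | G t]) ω =
        (Set.indicator {ω' | t < τ ω'} (fun _ => (1:ℝ)) ω) *
          (μ[Set.indicator {ω' | t < τ ω' ∧ τ ω' ≤ s} X | F t]) ω /
            (μ[Set.indicator {ω' | t < τ ω'} (fun _ => (1:ℝ)) | F t]) ω := by
  classical
  set T : Set Ω := {ω | t < τ ω} with hTdef
  set S : Set Ω := {ω' | t < τ ω' ∧ τ ω' ≤ s} with hSdef
  set D : Ω → ℝ := Set.indicator T (fun _ => (1:ℝ)) with hDdef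
  set Y : Ω → ℝ := Set.indicator S X with hYdef
  -- basic measurability
  have hFleG : (F t : MeasurableSpace Ω) ≤ G t := by
    rw [hG t]; exact le_sup_left
  have hTG : MeasurableSet[G t] T := by
    have := (hτ t).compl
    convert this using 1
    ext ω; simp [hTdef, not_le]
  have hT : MeasurableSet T := G.le t _ hTG
  have hS : MeasurableSet S := by
    have h1 : MeasurableSet {ω | τ ω ≤ s} := by
      have := G.le s _ (hτ s); simpa using this
    have h2 : S = T ∩ {ω | τ ω ≤ s} := by ext ω; simp [hSdef, hTdef, Set.mem_setOf_eq]
    rw [h2]; exact hT.inter h1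
  have hY : Integrable Y μ := hX.indicator hS
  have hD : Integrable D μ := (integrable_const (1:ℝ)).indicator hT
  -- the key structural lemma: every `G t`-set coincides with an `F t`-set on `T`
  have key : ∀ A : Set Ω, MeasurableSet[G t] A →
      ∃ B : Set Ω, MeasurableSet[F t] B ∧ A ∩ T = B ∩ T := by
    intro A hA
    let m' : MeasurableSpace Ω :=
      { MeasurableSet' := fun A => ∃ B : Set Ω, MeasurableSet[F t] B ∧ A ∩ T = B ∩ T
        measurableSet_empty := ⟨∅, @MeasurableSet.empty Ω (F t), rfl⟩
        measurableSet_compl := by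
          rintro A ⟨B, hB, hAB⟩
          refine ⟨Bᶜ, hB.compl, ?_⟩
          rw [Set.ext_iff] at hAB ⊢
          intro ω
          have := hAB ω
          simp only [Set.mem_inter_iff, Set.mem_compl_iff] at this ⊢
          tauto
        measurableSet_iUnion := by
          rintro f hf
          choose B hB hfB using hf
          refine ⟨⋃ n, B n, MeasurableSet.iUnion hB, ?_⟩
          rw [Set.iUnion_inter, Set.iUnion_inter]
          exact Set.iUnion_congr hfB }
    have hle : (G t : MeasurableSpace Ω) ≤ m' := by
      rw [hG t]
      have hF : (F t : MeasurableSpace Ω) ≤ m' := fun A hA =>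
        (⟨A, hA, rfl⟩ : ∃ B : Set Ω, MeasurableSet[F t] B ∧ A ∩ T = B ∩ T)
      refine sup_le hF (MeasurableSpace.generateFrom_le ?_)
      rintro A ⟨v, hv, rfl⟩
      refine ⟨∅, @MeasurableSet.empty Ω (F t), ?_⟩
      ext ω
      simp only [Set.mem_inter_iff, Set.mem_setOf_eq, Set.mem_empty_iff_false, false_and,
        iff_false, not_and, hTdef]
      intro h1 h2
      exact absurd (h1.trans hv) (not_le.2 h2)
    exact hle A hA
  -- notation for the three conditional expectations
  set W : Ω → ℝ := μ[Y | G t] with hWdef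
  set f1 : Ω → ℝ := μ[Y | F t] with hf1def
  set fD : Ω → ℝ := μ[D | F t] with hfDdef
  have hWint : Integrable W μ := integrable_condExp
  have hf1int : Integrable f1 μ := integrable_condExp
  have hWsm : StronglyMeasurable[G t] W := stronglyMeasurable_condExp
  have hf1sm : StronglyMeasurable[F t] f1 := stronglyMeasurable_condExp
  have hfDsm : StronglyMeasurable[F t] fD := stronglyMeasurable_condExp
  -- `Y` is supported on `T`, so `W = 1_T · W` a.e.
  have hYT : Y = Set.indicator T Y := by
    funext ω
    by_cases hω : ω ∈ T
    · rw [Set.indicator_of_mem hω]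
    · rw [Set.indicator_of_notMem hω]
      have : ω ∉ S := fun h => hω h.1
      exact Set.indicator_of_notMem this X
  have haW : W =ᵐ[μ] Set.indicator T W := by
    conv_lhs => rw [hWdef, hYT]
    exact condExp_indicator hY hTG
  -- bounds for `fD`
  have hfD01 : ∀ᵐ ω ∂μ, 0 ≤ fD ω ∧ fD ω ≤ 1 := by
    have h0 : 0 ≤ᵐ[μ] fD := condExp_nonneg (Filter.Eventually.of_forall fun ω =>
      Set.indicator_nonneg (fun _ _ => zero_le_one) ω)
    have h1 : fD ≤ᵐ[μ] μ[(fun _ => (1:ℝ)) | F t] := by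
      refine condExp_mono hD (integrable_const 1) (Filter.Eventually.of_forall fun ω => ?_)
      exact Set.indicator_le_self' (fun _ _ => zero_le_one) ω
    have hc : μ[(fun _ => (1:ℝ)) | F t] = fun _ => (1:ℝ) := condExp_const (F.le t) 1
    filter_upwards [h0, h1] with ω h0ω h1ω
    exact ⟨h0ω, by rwa [hc] at h1ω⟩
  -- integrability of products
  have hfDW : Integrable (fun ω => fD ω * W ω) μ := by
    refine Integrable.mono' hWint.norm
      (((hfDsm.mono (F.le t)).mul (hWsm.mono (G.le t))).aestronglyMeasurable) ?_
    filter_upwards [hfD01] with ω hω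
    rw [norm_mul]
    calc ‖fD ω‖ * ‖W ω‖ ≤ 1 * ‖W ω‖ := by
          apply mul_le_mul_of_nonneg_right _ (norm_nonneg _)
          rw [Real.norm_eq_abs, abs_le]; constructor <;> linarith [hω.1, hω.2]
      _ = ‖W ω‖ := one_mul _
  have hf1D : Integrable (fun ω => f1 ω * D ω) μ := by
    refine Integrable.mono' hf1int.norm
      (((hf1sm.mono (F.le t)).mul (stronglyMeasurable_const.indicator hT)
        ).aestronglyMeasurable) ?_
    refine Filter.Eventually.of_forall fun ω => ?_
    rw [norm_mul]
    have : ‖D ω‖ ≤ 1 := by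
      by_cases hω : ω ∈ T
      · simp [hDdef, Set.indicator_of_mem hω]
      · simp [hDdef, Set.indicator_of_notMem hω]
    calc ‖f1 ω‖ * ‖D ω‖ ≤ ‖f1 ω‖ * 1 :=
          mul_le_mul_of_nonneg_left this (norm_nonneg _)
      _ = ‖f1 ω‖ := mul_one _
  -- the function which we show vanishes a.e.
  set ψ : Ω → ℝ := fun ω => fD ω * W ω - f1 ω with hψdef
  set Φ : Ω → ℝ := Set.indicator T ψ with hΦdef
  have hψint : Integrable ψ μ := hfDW.sub hf1int
  have hΦint : Integrable Φ μ := hψint.indicator hT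
  have hΦsm : StronglyMeasurable[G t] Φ :=
    (((hfDsm.mono hFleG).mul hWsm).sub (hf1sm.mono hFleG)).indicator hTG
  -- tower property: μ[W | F t] = f1
  have htower : μ[W | F t] =ᵐ[μ] f1 := by
    rw [hWdef, hf1def]
    exact condExp_condExp_of_le hFleG (G.le t)
  -- `1_T·(fD·W)` agrees a.e. with `fD·W`
  have hTfDW : Set.indicator T (fun ω => fD ω * W ω) =ᵐ[μ] fun ω => fD ω * W ω := by
    filter_upwards [haW] with ω hω
    by_cases hmem : ω ∈ T
    · rw [Set.indicator_of_mem hmem]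
    · rw [Set.indicator_of_notMem hmem, hω, Set.indicator_of_notMem hmem, mul_zero]
  -- `1_T·f1 = f1·D` pointwise
  have hTf1 : Set.indicator T f1 = fun ω => f1 ω * D ω := by
    funext ω
    by_cases hmem : ω ∈ T
    · rw [Set.indicator_of_mem hmem, hDdef, Set.indicator_of_mem hmem, mul_one]
    · rw [Set.indicator_of_notMem hmem, hDdef, Set.indicator_of_notMem hmem, mul_zero]
  -- the main computation: ∫_A Φ = 0 for every A ∈ G t
  have hint0 : ∀ A : Set Ω, MeasurableSet[G t] A → ∫ ω in A, Φ ω ∂μ = 0 := by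
    intro A hA
    obtain ⟨B, hB, hAB⟩ := key A hA
    have hAmΩ : MeasurableSet A := G.le t _ hA
    have hBmΩ : MeasurableSet B := F.le t _ hB
    have step1 : ∫ ω in A, Φ ω ∂μ = ∫ ω in B, Φ ω ∂μ := by
      rw [hΦdef, setIntegral_indicator hT, setIntegral_indicator hT, hAB]
    -- split Φ = 1_T(fD·W) - 1_T f1 on B
    have hsplit : ∀ ω, Φ ω = Set.indicator T (fun ω => fD ω * W ω) ω
        - Set.indicator T f1 ω := by
      intro ω
      by_cases hmem : ω ∈ T
      · simp only [hΦdef, Set.indicator_of_mem hmem, hψdef]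
      · simp only [hΦdef, Set.indicator_of_notMem hmem, sub_zero, sub_self]
    have hi1 : Integrable (Set.indicator T (fun ω => fD ω * W ω)) μ := hfDW.indicator hT
    have hi2 : Integrable (Set.indicator T f1) μ := hf1int.indicator hT
    have step2 : ∫ ω in B, Φ ω ∂μ =
        (∫ ω in B, Set.indicator T (fun ω => fD ω * W ω) ω ∂μ)
          - ∫ ω in B, Set.indicator T f1 ω ∂μ := by
      simp_rw [hsplit]
      exact integral_sub (hi1.integrableOn) (hi2.integrableOn)
    -- first term
    have term1 : ∫ ω in B, Set.indicator T (fun ω => fD ω * W ω) ω ∂μ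
        = ∫ ω in B, fD ω * f1 ω ∂μ := by
      rw [setIntegral_congr_ae hBmΩ (hTfDW.mono fun ω h _ => h)]
      rw [← setIntegral_condExp (F.le t) hfDW hB]
      refine setIntegral_congr_ae hBmΩ ?_
      have hmul : μ[(fun ω => fD ω * W ω) | F t] =ᵐ[μ] fun ω => fD ω * (μ[W | F t]) ω := by
        have := condExp_mul_of_stronglyMeasurable_left (μ := μ) hfDsm (g := W) hfDW hWint
        exact this
      filter_upwards [hmul, htower] with ω h1 h2 _
      rw [h1, h2]
    -- second term
    have term2 : ∫ ω in B, Set.indicator T f1 ω ∂μ = ∫ ω in B, f1 ω * fD ω ∂μ := by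
      rw [hTf1]
      rw [← setIntegral_condExp (F.le t) hf1D hB]
      refine setIntegral_congr_ae hBmΩ ?_
      have hmul : μ[(fun ω => f1 ω * D ω) | F t] =ᵐ[μ] fun ω => f1 ω * (μ[D | F t]) ω := by
        have := condExp_mul_of_stronglyMeasurable_left (μ := μ) hf1sm (g := D) hf1D hD
        exact this
      filter_upwards [hmul] with ω h1 _
      rw [h1]
    rw [step1, step2, term1, term2]
    have : ∀ ω, fD ω * f1 ω = f1 ω * fD ω := fun ω => mul_comm _ _
    simp_rw [this]
    ring
  -- conclude Φ = 0 a.e.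
  haveI : SigmaFinite (μ.trim (G.le t)) := by infer_instance
  have hΦ0 : Φ =ᵐ[μ] 0 := by
    have h := ae_eq_condExp_of_forall_setIntegral_eq (μ := μ) (G.le t)
      (f := (0 : Ω → ℝ)) (g := Φ) (integrable_zero _ _ _)
      (fun A hA _ => hΦint.integrableOn)
      (fun A hA _ => by rw [hint0 A hA]; simp)
      (hΦsm.aestronglyMeasurable)
    rw [condExp_zero] at h
    exact h
  -- finish
  filter_upwards [hΦ0, hpos] with ω h0 hp htω
  have hmem : ω ∈ T := htω
  have hΦω : fD ω * W ω - f1 ω = 0 := by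
    have : Φ ω = 0 := h0
    rwa [hΦdef, Set.indicator_of_mem hmem] at this
  have hfDpos : 0 < fD ω := hp
  have hDω : D ω = 1 := Set.indicator_of_mem hmem _
  rw [hDω, one_mul, eq_div_iff (ne_of_gt hfDpos)]
  linarith [hΦω]
end

section
/- With 𝒢_t = ℱ_t ∨ σ(1_{τ≤u} : u ≤ t), for any 𝒢_t-measurable random variable Y there exists an ℱ_t-measurable random variable Z such that 1_{τ>t} Y = 1_{τ>t} Z almost surely. -/
open MeasureTheory Set

/-- Projection lemma: with `𝒢_t = ℱ_t ∨ σ(1_{τ≤u} : u ≤ t)`, for any `𝒢_t`-measurable `Y`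
there is an `ℱ_t`-measurable `Z` with `1_{τ>t} Y = 1_{τ>t} Z` almost surely. -/
theorem exists_pre_default_projection
    {Ω : Type*} {mΩ : MeasurableSpace Ω} (μ : Measure Ω) [IsProbabilityMeasure μ]
    (F G : Filtration ℝ mΩ) (τ : Ω → ℝ) (t : ℝ) (Y : Ω → ℝ)
    (hG : ∀ u : ℝ, (G u : MeasurableSpace Ω) =
      (F u : MeasurableSpace Ω) ⊔
        MeasurableSpace.generateFrom {A : Set Ω | ∃ v ≤ u, A = {ω | τ ω ≤ v}})
    (hY : Measurable[G t] Y) :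
    ∃ Z : Ω → ℝ, Measurable[F t] Z ∧
      ∀ᵐ ω ∂μ, Set.indicator {ω' | t < τ ω'} Y ω = Set.indicator {ω' | t < τ ω'} Z ω := by
  classical
  set S : Set Ω := {ω | t < τ ω} with hSdef
  -- Step 1 : every `G t`-measurable set agrees with an `F t`-measurable set on `S`.
  have key : ∀ A : Set Ω, MeasurableSet[G t] A →
      ∃ B : Set Ω, MeasurableSet[F t] B ∧ A ∩ S = B ∩ S := by
    have aux : ∀ {A B : Set Ω}, A ∩ S = B ∩ S → ∀ ω ∈ S, (ω ∈ A ↔ ω ∈ B) := by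
      intro A B h ω hω
      constructor
      · intro hA; exact ((Set.ext_iff.mp h ω).mp ⟨hA, hω⟩).1
      · intro hB; exact ((Set.ext_iff.mp h ω).mpr ⟨hB, hω⟩).1
    let m : MeasurableSpace Ω :=
      { MeasurableSet' := fun A => ∃ B, MeasurableSet[F t] B ∧ A ∩ S = B ∩ S
        measurableSet_empty := ⟨∅, @MeasurableSet.empty _ (F t), rfl⟩
        measurableSet_compl := by
          rintro A ⟨B, hB, hAB⟩
          refine ⟨Bᶜ, hB.compl, ?_⟩
          ext ω
          simp only [Set.mem_inter_iff, Set.mem_compl_iff]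
          constructor
          · rintro ⟨h1, h2⟩; exact ⟨fun hc => h1 ((aux hAB ω h2).mpr hc), h2⟩
          · rintro ⟨h1, h2⟩; exact ⟨fun hc => h1 ((aux hAB ω h2).mp hc), h2⟩
        measurableSet_iUnion := by
          intro f hf
          choose B hB hfB using hf
          refine ⟨⋃ i, B i, MeasurableSet.iUnion hB, ?_⟩
          rw [Set.iUnion_inter, Set.iUnion_inter]
          exact Set.iUnion_congr hfB }
    have hle : (G t : MeasurableSpace Ω) ≤ m := by
      rw [hG t]
      refine sup_le (fun s hs => ⟨s, hs, rfl⟩) (MeasurableSpace.generateFrom_le ?_)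
      rintro s ⟨v, hv, rfl⟩
      refine ⟨∅, @MeasurableSet.empty _ (F t), ?_⟩
      ext ω
      simp only [Set.mem_inter_iff, Set.mem_setOf_eq, Set.empty_inter,
        Set.mem_empty_iff_false, iff_false, not_and, hSdef]
      intro h1 h2
      linarith
    exact fun A hA => hle A hA
  have auxS : ∀ {A B : Set Ω}, A ∩ S = B ∩ S → ∀ ω ∈ S, (ω ∈ A ↔ ω ∈ B) := by
    intro A B h ω hω
    constructor
    · intro hA; exact ((Set.ext_iff.mp h ω).mp ⟨hA, hω⟩).1
    · intro hB; exact ((Set.ext_iff.mp h ω).mpr ⟨hB, hω⟩).1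
  -- Step 2 : choose `F t`-measurable versions of the level sets of `Y`.
  choose B hBmeas hBeq using fun q : ℚ => key (Y ⁻¹' Iio (q : ℝ)) (hY measurableSet_Iio)
  have hBiff : ∀ (q : ℚ) (ω : Ω), ω ∈ S → (ω ∈ B q ↔ Y ω < (q : ℝ)) := by
    intro q ω hω
    have h := auxS (hBeq q) ω hω
    simpa [Set.mem_preimage] using h.symm
  set E : Ω → Set ℝ := fun ω => {x | ∃ q : ℚ, ω ∈ B q ∧ (q : ℝ) = x} with hE
  set U : Set Ω := ⋂ q : ℚ, (B q)ᶜ with hU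
  set N : Set Ω := ⋂ r : ℚ, ⋃ q : ℚ, ⋃ _ : q < r, B q with hN
  have hUmeas : MeasurableSet[F t] U := MeasurableSet.iInter fun q => (hBmeas q).compl
  have hNmeas : MeasurableSet[F t] N :=
    MeasurableSet.iInter fun r => MeasurableSet.iUnion fun q =>
      MeasurableSet.iUnion fun _ => hBmeas q
  -- basic facts about `E`
  have hEne : ∀ {ω : Ω}, ω ∉ U → (E ω).Nonempty := by
    intro ω hω
    simp only [hU, Set.mem_iInter, Set.mem_compl_iff, not_forall, not_not] at hω
    obtain ⟨q, hq⟩ := hω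
    exact ⟨(q : ℝ), ⟨q, hq, rfl⟩⟩
  have hEbdd : ∀ {ω : Ω}, ω ∉ N → BddBelow (E ω) := by
    intro ω hω
    simp only [hN, Set.mem_iInter, Set.mem_iUnion, not_forall, not_exists] at hω
    obtain ⟨r, hr⟩ := hω
    refine ⟨(r : ℝ), ?_⟩
    rintro x ⟨q, hq, rfl⟩
    by_contra h
    push_neg at h
    exact hr q (by exact_mod_cast h) hq
  set Z : Ω → ℝ := fun ω => if ω ∈ U ∪ N then 0 else sInf (E ω) with hZ
  -- Step 3 : `Z` is `F t`-measurable.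
  have hZmeas : Measurable[F t] Z := by
    apply measurable_of_Iio
    intro a
    have : Z ⁻¹' Iio a =
        ((U ∪ N) ∩ (if (0 : ℝ) < a then Set.univ else ∅)) ∪
        ((U ∪ N)ᶜ ∩ ⋃ q : ℚ, ⋃ _ : (q : ℝ) < a, B q) := by
      ext ω
      by_cases hω : ω ∈ U ∪ N
      · have hz : Z ω = 0 := by simp only [hZ]; rw [if_pos hω]
        simp only [Set.mem_preimage, Set.mem_Iio, hz]
        constructor
        · intro ha
          exact Or.inl ⟨hω, by rw [if_pos ha]; trivial⟩
        · rintro (⟨-, hmem⟩ | ⟨hc, -⟩)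
          · by_cases ha : (0 : ℝ) < a
            · exact ha
            · rw [if_neg ha] at hmem; exact absurd hmem (Set.notMem_empty ω)
          · exact absurd hω hc
      · have hne : (E ω).Nonempty := hEne (fun h => hω (Or.inl h))
        have hbd : BddBelow (E ω) := hEbdd (fun h => hω (Or.inr h))
        have hz : Z ω = sInf (E ω) := by simp only [hZ]; rw [if_neg hω]
        simp only [Set.mem_preimage, Set.mem_Iio, hz]
        rw [csInf_lt_iff hbd hne]
        constructor
        · rintro ⟨x, ⟨q, hq, rfl⟩, hx⟩
          exact Or.inr ⟨hω, Set.mem_iUnion.mpr ⟨q, Set.mem_iUnion.mpr ⟨hx, hq⟩⟩⟩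
        · rintro (⟨hc, -⟩ | ⟨-, hmem⟩)
          · exact absurd hc hω
          · rw [Set.mem_iUnion] at hmem
            obtain ⟨q, hmem⟩ := hmem
            rw [Set.mem_iUnion] at hmem
            obtain ⟨hq, hBq⟩ := hmem
            exact ⟨(q : ℝ), ⟨q, hBq, rfl⟩, hq⟩
    rw [this]
    refine MeasurableSet.union ?_ ?_
    · refine (hUmeas.union hNmeas).inter ?_
      by_cases ha : (0 : ℝ) < a
      · simp only [if_pos ha]; exact @MeasurableSet.univ _ (F t)
      · simp only [if_neg ha]; exact @MeasurableSet.empty _ (F t)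
    · exact (hUmeas.union hNmeas).compl.inter
        (MeasurableSet.iUnion fun q => MeasurableSet.iUnion fun _ => hBmeas q)
  -- Step 4 : `Y = Z` on `S`.
  have hYZ : ∀ ω ∈ S, Y ω = Z ω := by
    intro ω hω
    have hiff : ∀ q : ℚ, ω ∈ B q ↔ Y ω < (q : ℝ) := fun q => hBiff q ω hω
    have hωU : ω ∉ U := by
      obtain ⟨q, hq⟩ := exists_rat_gt (Y ω)
      simp only [hU, Set.mem_iInter, Set.mem_compl_iff, not_forall, not_not]
      exact ⟨q, (hiff q).mpr hq⟩
    have hωN : ω ∉ N := by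
      obtain ⟨r, hr⟩ := exists_rat_lt (Y ω)
      simp only [hN, Set.mem_iInter, Set.mem_iUnion, not_forall, not_exists]
      refine ⟨r, fun q hq hBq => ?_⟩
      have h1 : Y ω < (q : ℝ) := (hiff q).mp hBq
      have h2 : (q : ℝ) < (r : ℝ) := by exact_mod_cast hq
      linarith
    have hωUN : ω ∉ U ∪ N := fun h => h.elim hωU hωN
    have hEeq : E ω = {x : ℝ | ∃ q : ℚ, Y ω < (q : ℝ) ∧ (q : ℝ) = x} := by
      ext x
      constructor
      · rintro ⟨q, hq, rfl⟩; exact ⟨q, (hiff q).mp hq, rfl⟩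
      · rintro ⟨q, hq, rfl⟩; exact ⟨q, (hiff q).mpr hq, rfl⟩
    have hne : (E ω).Nonempty := hEne hωU
    have hbd : BddBelow (E ω) := hEbdd hωN
    have h1 : Y ω ≤ sInf (E ω) := by
      refine le_csInf hne ?_
      rintro x hx
      rw [hEeq] at hx
      obtain ⟨q, hq, rfl⟩ := hx
      exact hq.le
    have h2 : sInf (E ω) ≤ Y ω := by
      refine le_of_forall_gt_imp_ge_of_dense ?_
      intro c hc
      obtain ⟨q, hq1, hq2⟩ := exists_rat_btwn hc
      have hmem : (q : ℝ) ∈ E ω := by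
        rw [hEeq]; exact ⟨q, hq1, rfl⟩
      exact (csInf_le hbd hmem).trans hq2.le
    simp only [hZ]
    rw [if_neg hωUN]
    exact le_antisymm h1 h2
  -- Conclusion
  refine ⟨Z, hZmeas, Filter.Eventually.of_forall fun ω => ?_⟩
  by_cases hω : ω ∈ S
  · rw [Set.indicator_of_mem hω, Set.indicator_of_mem hω]
    exact hYZ ω hω
  · rw [Set.indicator_of_notMem hω, Set.indicator_of_notMem hω]
end
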